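/- The set of affine rational points of the elliptic curve O_12 : y^2 = x^3 + 7x^2 + 12x over ℚ consists of exactly three points; that is, {(x, y) ∈ ℚ × ℚ : y^2 = x^3 + 7x^2 + 12x} = {(0, 0), (−3, 0), (−4, 0)}. -/

import Mathlib

/-!
If `(x, y)` lies on the curve and `y ≠ 0`, then `x ≠ 0` and, with `t = y / x`, `x` is a root of
`X² + (7 - t²) X + 12`, so the discriminant `t⁴ - 14 t² + 1` is a square in `ℚ`, with `t ≠ 0`.
Writing `t = p / q` turns this into `p⁴ - 14 p² q² + q⁴ = w²`, which has no solution with `pq ≠ 0`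
by Fermat's descent: from `w² + 12 (pq)² = (p² - q²)²` one gets `p² - q² = s² + 3 r²` with
`rs = pq`; splitting `p, q, r, s` into common factors and a congruence mod 8 leave a primitive
Pythagorean triple `(m² - n², 2mn, m² + n²)` whose parameters give a solution with `|mn| < |pq|`.
-/

def quartic (p q : ℤ) : ℤ := p ^ 4 - 14 * p ^ 2 * q ^ 2 + q ^ 4

theorem quartic_comm (p q : ℤ) : quartic p q = quartic q p := by
  unfold quartic; ring

theorem quartic_eq_sq_sub (p q : ℤ) :
    quartic p q = (p ^ 2 - q ^ 2) ^ 2 - 12 * (p * q) ^ 2 := by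
  unfold quartic; ring

theorem isCoprime_mul_of_quartic_eq_sq {p q w : ℤ} (hpq : IsCoprime p q)
    (h : quartic p q = w ^ 2) : IsCoprime w (p * q) := by
  have hp : IsCoprime p (w ^ 2) := by
    rw [← h, show quartic p q = q ^ 4 + p * (p ^ 3 - 14 * p * q ^ 2) by unfold quartic; ring]
    exact hpq.pow_right.add_mul_left_right _
  have hq : IsCoprime q (w ^ 2) := by
    rw [← h, show quartic p q = p ^ 4 + q * (q ^ 3 - 14 * q * p ^ 2) by unfold quartic; ring]
    exact hpq.symm.pow_right.add_mul_left_right _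
  exact ((IsCoprime.pow_right_iff two_pos).mp (hp.mul_left hq)).symm

theorem Int.exists_eq_sq_and_eq_sq_of_isCoprime {a b c : ℤ} (ha : 0 < a) (hb : 0 < b)
    (hab : IsCoprime a b) (h : a * b = c ^ 2) : ∃ r s, a = r ^ 2 ∧ b = s ^ 2 ∧ r * s = c := by
  have eq_sq : ∀ {u v : ℤ}, 0 < u → IsCoprime u v → u * v = c ^ 2 → ∃ r, u = r ^ 2 := by
    intro u v hu huv h
    obtain ⟨r, hr | hr⟩ := Int.sq_of_isCoprime huv h
    · exact ⟨r, hr⟩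
    · linarith [sq_nonneg r]
  obtain ⟨r, rfl⟩ := eq_sq ha hab h
  obtain ⟨s, rfl⟩ := eq_sq hb hab.symm (by rw [mul_comm, h])
  obtain hrs | hrs := sq_eq_sq_iff_eq_or_eq_neg.mp (show (r * s) ^ 2 = c ^ 2 by rw [← h]; ring)
  · exact ⟨r, s, rfl, rfl, hrs⟩
  · exact ⟨-r, s, by ring, rfl, by rw [neg_mul, hrs, neg_neg]⟩

theorem Int.exists_eq_sq_add_mul_sq {k Z w y : ℤ} (hk : Prime k) (hk0 : 0 < k) (hZ : 0 < Z)
    (hy : y ≠ 0) (hwy : IsCoprime w y) (h : Z ^ 2 = w ^ 2 + 4 * k * y ^ 2) :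
    ∃ r s, Z = s ^ 2 + k * r ^ 2 ∧ r * s = y := by
  have of_mul_eq : ∀ u v : ℤ, 0 < u → 0 < v → u * v = y ^ 2 → IsCoprime (v - k * u) y →
      ∃ r s, k * u + v = s ^ 2 + k * r ^ 2 ∧ r * s = y := by
    intro u v hu hv huv hcop
    have huv' : IsCoprime u v := by
      have := hcop.pow_right (n := 2)
      rw [← huv, show v - k * u = v + u * (-k) by ring] at this
      exact this.of_mul_right_left.of_add_mul_left_left.symm
    obtain ⟨r, s, rfl, rfl, hrs⟩ := exists_eq_sq_and_eq_sq_of_isCoprime hu hv huv' huv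
    exact ⟨r, s, by ring, hrs⟩
  obtain ⟨α, hα⟩ : Even (Z - w) := by
    have : Even ((Z - w) * (Z + w)) := ⟨2 * k * y ^ 2, by linear_combination h⟩
    simpa [Int.even_mul, Int.even_add, Int.even_sub] using this
  have hwZ := abs_lt_of_sq_lt_sq' (show w ^ 2 < Z ^ 2 by nlinarith [sq_pos_of_ne_zero hy]) hZ.le
  have hα0 : 0 < α := by linarith
  have hβ0 : 0 < α + w := by linarith
  have hαβ : α * (α + w) = k * y ^ 2 := by nlinarith
  rcases hk.dvd_or_dvd ⟨y ^ 2, hαβ⟩ with ⟨u, hu⟩ | ⟨u, hu⟩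
  · obtain ⟨r, s, hrs, hy⟩ := of_mul_eq u (α + w) (pos_of_mul_pos_right (hu ▸ hα0) hk0.le) hβ0
      (mul_left_cancel₀ hk.ne_zero (by rw [← mul_assoc, ← hu, hαβ]))
      (by rwa [← hu, add_sub_cancel_left])
    exact ⟨r, s, by linear_combination hα + hrs + hu, hy⟩
  · obtain ⟨r, s, hrs, hy⟩ := of_mul_eq u α (pos_of_mul_pos_right (hu ▸ hβ0) hk0.le) hα0
      (mul_left_cancel₀ hk.ne_zero (by rw [← mul_assoc, ← hu, mul_comm, hαβ]))
      (by rw [← hu, sub_add_cancel_left]; exact hwy.neg_left)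
    exact ⟨r, s, by linear_combination hα + hrs + hu, hy⟩

theorem exists_eq_mul_of_mul_eq_mul {M : Type*} [CommMonoidWithZero M] [IsCancelMulZero M]
    [DecompositionMonoid M] {p q m n : M} (hp : p ≠ 0) (h : p * q = m * n) :
    ∃ a b c d, p = a * b ∧ q = c * d ∧ m = a * c ∧ n = b * d := by
  obtain ⟨a, b, ⟨c, rfl⟩, ⟨d, rfl⟩, rfl⟩ := exists_dvd_and_dvd_of_dvd_mul (⟨q, h.symm⟩ : p ∣ m * n)
  exact ⟨a, b, c, d, rfl, mul_left_cancel₀ hp (by rw [h, mul_mul_mul_comm]), rfl, rfl⟩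

theorem Int.sq_emod_eight (x : ℤ) :
    x % 2 = 1 ∧ x ^ 2 % 8 = 1 ∨ x % 2 = 0 ∧ (x ^ 2 % 8 = 0 ∨ x ^ 2 % 8 = 4) := by
  have h : x ^ 2 % 8 = (x % 8) ^ 2 % 8 := by simp [pow_two, Int.mul_emod]
  have : 0 ≤ x % 8 := Int.emod_nonneg x (by norm_num)
  have : x % 8 < 8 := Int.emod_lt_of_pos x (by norm_num)
  interval_cases hx8 : x % 8 <;> omega

theorem exists_quartic_eq_sq_of_sq_mul_eq {a b c d : ℤ} (hb : b ≠ 0) (hd : d ≠ 0)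
    (had : IsCoprime a d) (hbc : IsCoprime b c)
    (h : b ^ 2 * (a ^ 2 - 3 * d ^ 2) = c ^ 2 * (a ^ 2 + d ^ 2)) :
    ∃ m n, IsCoprime m n ∧ d = 2 * m * n ∧ quartic m n = c ^ 2 := by
  obtain ⟨T, hb2⟩ : b ^ 2 ∣ a ^ 2 + d ^ 2 := hbc.pow.dvd_of_dvd_mul_left ⟨_, h.symm⟩
  have hc2 : a ^ 2 - 3 * d ^ 2 = c ^ 2 * T :=
    mul_left_cancel₀ (pow_ne_zero 2 hb) (by rw [h, hb2]; ring)
  have hT4 : T ∣ 4 := by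
    obtain ⟨u, v, huv⟩ := had.pow (m := 2) (n := 2)
    exact ⟨u * (3 * b ^ 2 + c ^ 2) + v * (b ^ 2 - c ^ 2),
      by linear_combination (-4) * huv + (3 * u + v) * hb2 + (u - v) * hc2⟩
  have hT0 : 0 < T := pos_of_mul_pos_right (hb2 ▸ by positivity) (sq_nonneg b)
  have had2 : ¬ (a % 2 = 0 ∧ d % 2 = 0) := by
    rintro ⟨ha, hd⟩
    have := had.isUnit_of_dvd' (Int.dvd_of_emod_eq_zero ha) (Int.dvd_of_emod_eq_zero hd)
    norm_num [Int.isUnit_iff] at this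
  -- `a, d` both odd would give `T c² ≡ 6 (mod 8)`, so `a² + d²` is odd and `T = 1`;
  -- then `a` even would give `b² ≡ 5 (mod 8)`.
  obtain ⟨rfl, ha⟩ : T = 1 ∧ a % 2 = 1 := by
    have := Int.le_of_dvd four_pos hT4
    have := Int.sq_emod_eight a
    have := Int.sq_emod_eight b
    have := Int.sq_emod_eight c
    have := Int.sq_emod_eight d
    interval_cases T <;> omega
  have hpyth : PythagoreanTriple a d |b| := by
    unfold PythagoreanTriple; rw [abs_mul_abs_self]; linear_combination hb2
  obtain ⟨m, n, rfl, rfl, -, hmn, -⟩ := hpyth.coprime_classification'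
    (Int.isCoprime_iff_gcd_eq_one.mp had) ha (abs_pos.mpr hb)
  exact ⟨m, n, Int.isCoprime_iff_gcd_eq_one.mpr hmn, rfl, by unfold quartic; linear_combination hc2⟩

theorem exists_quartic_eq_sq_natAbs_lt {p q w : ℤ} (hp : p ≠ 0) (hq : q ≠ 0)
    (hpq : IsCoprime p q) (hlt : q ^ 2 < p ^ 2) (h : quartic p q = w ^ 2) :
    ∃ m n c, m ≠ 0 ∧ n ≠ 0 ∧ IsCoprime m n ∧ (m * n).natAbs < (p * q).natAbs ∧
      quartic m n = c ^ 2 := by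
  obtain ⟨r, s, hZ, hrs⟩ := Int.exists_eq_sq_add_mul_sq Int.prime_three three_pos
    (sub_pos.mpr hlt) (mul_ne_zero hp hq) (isCoprime_mul_of_quartic_eq_sq hpq h)
    (by rw [quartic_eq_sq_sub] at h; linear_combination h)
  obtain ⟨a, b, c, d, rfl, rfl, rfl, rfl⟩ :=
    exists_eq_mul_of_mul_eq_mul hp (show p * q = s * r by rw [← hrs, mul_comm])
  obtain ⟨m, n, hmn, rfl, hc⟩ := exists_quartic_eq_sq_of_sq_mul_eq (right_ne_zero_of_mul hp)
    (right_ne_zero_of_mul hq) hpq.of_mul_left_left.of_mul_right_right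
    hpq.of_mul_left_right.of_mul_right_left (by linear_combination hZ)
  have hm : m ≠ 0 := by rintro rfl; simp at hq
  have hn : n ≠ 0 := by rintro rfl; simp at hq
  refine ⟨m, n, c, hm, hn, hmn, ?_, hc⟩
  calc (m * n).natAbs < (2 * m * n).natAbs := by
        rw [mul_assoc, Int.natAbs_mul 2]
        exact lt_two_mul_self (Int.natAbs_pos.mpr (mul_ne_zero hm hn))
    _ ≤ (a * b * (c * (2 * m * n))).natAbs :=
      Nat.le_of_dvd (Int.natAbs_pos.mpr (mul_ne_zero hp hq))
        (Int.natAbs_dvd_natAbs.mpr (Dvd.intro_left (a * b * c) (by ring)))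

theorem quartic_ne_sq {p q : ℤ} (hp : p ≠ 0) (hq : q ≠ 0) (hpq : IsCoprime p q) (w : ℤ) :
    quartic p q ≠ w ^ 2 := by
  induction hN : (p * q).natAbs using Nat.strong_induction_on generalizing p q w with
  | _ N ih =>
  intro h
  wlog hlt : q ^ 2 < p ^ 2 generalizing p q
  · obtain hlt | heq := (not_lt.mp hlt : p ^ 2 ≤ q ^ 2).lt_or_eq
    · exact this hq hp hpq.symm (by rwa [mul_comm]) (by rwa [quartic_comm]) hlt
    · rw [quartic_eq_sq_sub, heq, sub_self] at h
      nlinarith [sq_pos_of_ne_zero (mul_ne_zero hp hq), sq_nonneg w]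
  obtain ⟨m, n, c, hm, hn, hmn, hlt', hc⟩ := exists_quartic_eq_sq_natAbs_lt hp hq hpq hlt h
  exact ih (m * n).natAbs (hN ▸ hlt') hm hn hmn c rfl hc

theorem Rat.not_isSquare_pow_four_sub_fourteen_mul_sq_add_one {t : ℚ} (ht : t ≠ 0) :
    ¬ IsSquare (t ^ 4 - 14 * t ^ 2 + 1) := by
  rintro ⟨u, hu⟩
  obtain ⟨w, hw⟩ : IsSquare (quartic t.num t.den) := Rat.isSquare_intCast_iff.mp
    ⟨u * t.den ^ 2, by
      push_cast [quartic, ← Rat.mul_den_eq_num]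
      linear_combination (t.den : ℚ) ^ 4 * hu⟩
  exact quartic_ne_sq (Rat.num_ne_zero.mpr ht) (by exact_mod_cast t.den_nz)
    (Rat.isCoprime_num_den t) w (by rw [hw, sq])

/-- The set of affine rational points of the elliptic curve
`O₁₂ : y² = x³ + 7x² + 12x` over `ℚ` consists of exactly three points. -/
theorem stmt_6 :
    {p : ℚ × ℚ | p.2 ^ 2 = p.1 ^ 3 + 7 * p.1 ^ 2 + 12 * p.1} = {(0, 0), (-3, 0), (-4, 0)} := by
  ext ⟨x, y⟩
  simp only [Set.mem_ofPred_eq, Set.mem_insert_iff, Set.mem_singleton_iff, Prod.mk.injEq]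
  constructor
  · intro h
    obtain rfl | hy := eq_or_ne y 0
    · have : x * (x + 3) * (x + 4) = 0 := by linear_combination -h
      simp only [mul_eq_zero, add_eq_zero_iff_eq_neg] at this
      tauto
    · have hx : x ≠ 0 := by rintro rfl; exact hy (by simpa using h)
      have hroot : (y / x) ^ 2 * x = x ^ 2 + 7 * x + 12 := by
        field_simp
        linear_combination h
      exact (Rat.not_isSquare_pow_four_sub_fourteen_mul_sq_add_one (div_ne_zero hy hx)
        ⟨2 * x + 7 - (y / x) ^ 2, by linear_combination 4 * hroot⟩).elim
  · rintro (⟨rfl, rfl⟩ | ⟨rfl, rfl⟩ | ⟨rfl, rfl⟩) <;> norm_num
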